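/- arXiv:0907.0061 — 5 statements merged into one kernel-verified Lean document; each statement's English description precedes it below -/
import Mathlib

section
/- Let I be a small category, X : I ⥤ Cat a (strict) functor, and p : E ⥤ I any functor. There is a bijection between: (a) the set of pairs (F, φ) where F : Grothendieck X ⥤ E is a functor and φ : F ⋙ p ⟶ Grothendieck.forget X is a natural transformation; and (b) the set of left transformations from X to Γ(p), i.e. families consisting of a functor η_i : X.obj i ⥤ CostructuredArrow p i for every object i of I together with a natural transformation γ_u : η_i ⋙ CostructuredArrow.map u ⟶ X.map u ⋙ η_j for every morphism u : i ⟶ j of I, such that γ_{𝟙_i} is the identity (modulo the identifications X.map (𝟙 i) = 𝟙 and CostructuredArrow.map (𝟙 i) = 𝟙) and for composable u : i ⟶ j, v : j ⟶ k the 2-cell γ_{u ≫ v} equals the pasting composite of γ_u and γ_v (modulo the identifications X.map (u ≫ v) = X.map u ⋙ X.map v and CostructuredArrow.map (u ≫ v) = CostructuredArrow.map u ⋙ CostructuredArrow.map v). This is the object part of the adjunction between the Grothendieck construction and the comma-category functor Γ, specialized to ordinary (Set-enriched) categories. -/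
open CategoryTheory

universe v₁ u₁ v₂ u₂ v₃ u₃

variable {E : Type u₂} [Category.{v₂} E] {I : Type u₁} [Category.{v₁} I]

/-- `CostructuredArrow.map (𝟙 i)` is the identity functor. -/
theorem costructuredArrowMap_id (p : E ⥤ I) (i : I) :
    CostructuredArrow.map (S := p) (𝟙 i) = 𝟭 (CostructuredArrow p i) := by
  apply CategoryTheory.Functor.ext
  case h_obj => intro X; simp
  case h_map => aesop_cat

/-- `CostructuredArrow.map (u ≫ v)` is the composite
`CostructuredArrow.map u ⋙ CostructuredArrow.map v`. -/
theorem costructuredArrowMap_comp (p : E ⥤ I) {i j l : I} (u : i ⟶ j) (v : j ⟶ l) :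
    CostructuredArrow.map (S := p) (u ≫ v) =
      CostructuredArrow.map u ⋙ CostructuredArrow.map v := by
  apply CategoryTheory.Functor.ext
  case h_obj => intro X; simp
  case h_map => aesop_cat

/-- A left transformation from a functor `X : I ⥤ Cat` to the costructured-arrow diagram
`Γ(p) : i ↦ p ↓ i` of a functor `p : E ⥤ I`: it consists of functors
`η i : X.obj i ⥤ p ↓ i` together with 2-cells
`γ u : η i ⋙ CostructuredArrow.map u ⟶ X.map u ⋙ η j` for `u : i ⟶ j` which are unital
and compatible with composition, modulo the canonical identifications
`CostructuredArrow.map (𝟙 i) = 𝟭`, `X.map (𝟙 i) = 𝟭`,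
`CostructuredArrow.map (u ≫ v) = CostructuredArrow.map u ⋙ CostructuredArrow.map v` and
`X.map (u ≫ v) = X.map u ⋙ X.map v`. -/
structure GammaLeftTransformation (p : E ⥤ I) (X : I ⥤ Cat.{v₃, u₃}) where
  app : ∀ i : I, X.obj i ⥤ CostructuredArrow p i
  trans : ∀ {i j : I} (u : i ⟶ j), app i ⋙ CostructuredArrow.map u ⟶ (X.map u).toFunctor ⋙ app j
  trans_id : ∀ i : I,
    trans (𝟙 i) = eqToHom (by
      rw [costructuredArrowMap_id p i, X.map_id, Cat.Hom.id_toFunctor]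
      rw [Functor.comp_id]
      exact (Functor.id_comp _).symm)
  trans_comp : ∀ {i j l : I} (u : i ⟶ j) (v : j ⟶ l),
    trans (u ≫ v) =
      eqToHom (by rw [costructuredArrowMap_comp p u v] <;> exact (Functor.assoc _ _ _).symm) ≫
        Functor.whiskerRight (trans u) (CostructuredArrow.map v) ≫
        eqToHom (Functor.assoc _ _ _) ≫
        Functor.whiskerLeft (X.map u).toFunctor (trans v) ≫
        eqToHom (by rw [X.map_comp, Cat.Hom.comp_toFunctor] <;> exact (Functor.assoc _ _ _).symm)

/-! A functor out of `Grothendieck X` is the same as functors on the fibres `X.obj i ⥤ E` glued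
by coherent natural transformations along the morphisms of `I` (`Grothendieck.functorFrom`).
A transformation `φ : F ⋙ p ⟶ Grothendieck.forget X` is exactly what lifts the fibre functors
into `p ↓ i` and the gluing maps to morphisms over `u`; conversely, projecting a left
transformation along `p ↓ i ⥤ E` gives gluing data, and its structure arrows give `φ`.
The two constructions are inverse because every morphism `f` of `Grothendieck X` factors as
`(ιNatTrans f.base).app _ ≫ (ι X _).map f.fiber`. -/

namespace CategoryTheory.Grothendieck

variable {C : Type*} [Category C] {F : C ⥤ Cat}

lemma ιNatTrans_app_comp_ι_map {a b : Grothendieck F} (f : a ⟶ b) :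
    (ιNatTrans f.base).app a.fiber ≫ (ι F b.base).map f.fiber = f := by
  refine Grothendieck.ext _ _ (Category.comp_id _) ?_
  dsimp [ι, ιNatTrans]
  -- The fibre objects here agree only after unfolding `ι`, which `simp` does not see through;
  -- this is why `erw` and `change` recur below.
  erw [(F.map (𝟙 b.base)).toFunctor.map_id, Category.id_comp, eqToHom_trans_assoc,
    eqToHom_trans_assoc, eqToHom_refl, Category.id_comp]

lemma ιNatTrans_id_app (c : C) (x : F.obj c) :
    (ιNatTrans (𝟙 c)).app x = eqToHom (by rw [F.map_id]; rfl) := by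
  rw [eqToHom_eq]
  exact Grothendieck.ext _ _ rfl (Category.comp_id _)

lemma ιNatTrans_comp_app {c₁ c₂ c₃ : C} (f : c₁ ⟶ c₂) (g : c₂ ⟶ c₃)
    (x : F.obj c₁) :
    (ιNatTrans (f ≫ g)).app x =
      ((ιNatTrans f).app x ≫ (ιNatTrans g).app ((F.map f).toFunctor.obj x)) ≫
        eqToHom (by rw [F.map_comp]; rfl) := by
  set h := (ιNatTrans f).app x ≫ (ιNatTrans g).app ((F.map f).toFunctor.obj x)
  have h_fiber : h.fiber = eqToHom (by dsimp [h, ι]; rw [F.map_comp]; rfl) := by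
    dsimp [h, ιNatTrans]
    erw [(F.map g).toFunctor.map_id, Category.comp_id, Category.comp_id]
    rfl
  have h_factor := ιNatTrans_app_comp_ι_map h
  rw [h_fiber, eqToHom_map] at h_factor
  change (ιNatTrans (f ≫ g)).app x ≫ _ = h at h_factor
  rw [← h_factor]
  erw [Category.assoc, eqToHom_trans, eqToHom_refl, Category.comp_id]

end CategoryTheory.Grothendieck

lemma Sigma.natTrans_ext {C D B : Type*} [Category C] [Category D] [Category B] {p : D ⥤ B}
    {L : C ⥤ B} {G G' : C ⥤ D} {ψ : G ⋙ p ⟶ L} {ψ' : G' ⋙ p ⟶ L} (h : G = G')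
    (happ : ∀ a, ψ.app a = eqToHom (by rw [h]) ≫ ψ'.app a) :
    (⟨G, ψ⟩ : Σ G : C ⥤ D, G ⋙ p ⟶ L) = ⟨G', ψ'⟩ := by
  subst h
  obtain rfl : ψ = ψ' := by ext a; simpa using happ a
  rfl

namespace GammaLeftTransformation

variable {p : E ⥤ I} {X : I ⥤ Cat.{v₃, u₃}}

lemma ext {T T' : GammaLeftTransformation p X} (h : T.app = T'.app)
    (htrans : ∀ {i j : I} (u : i ⟶ j),
      T.trans u = eqToHom (by rw [h]) ≫ T'.trans u ≫ eqToHom (by rw [h])) : T = T' := by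
  obtain ⟨app, trans, _, _⟩ := T
  obtain ⟨app', trans', _, _⟩ := T'
  obtain rfl : app = app' := h
  obtain rfl : @trans = @trans' := by
    funext i j u
    simpa using htrans u
  rfl

section ofFunctor

variable (F : Grothendieck X ⥤ E) (φ : F ⋙ p ⟶ Grothendieck.forget X)

def ofFunctorApp (i : I) : X.obj i ⥤ CostructuredArrow p i :=
  (Grothendieck.ι X i ⋙ F).toCostructuredArrow p i (fun x => φ.app ⟨i, x⟩)
    (fun _ => (φ.naturality _).trans (Category.comp_id _))

def ofFunctorTrans {i j : I} (u : i ⟶ j) :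
    ofFunctorApp F φ i ⋙ CostructuredArrow.map u ⟶
      (X.map u).toFunctor ⋙ ofFunctorApp F φ j where
  app x := CostructuredArrow.homMk (F.map ((Grothendieck.ιNatTrans u).app x))
    (φ.naturality ((Grothendieck.ιNatTrans u).app x))
  naturality x y g := by
    ext
    have h := congrArg F.map ((Grothendieck.ιNatTrans u).naturality g)
    rw [F.map_comp, F.map_comp] at h
    exact h

lemma ofFunctorTrans_app_left {i j : I} (u : i ⟶ j) (x : X.obj i) :
    ((ofFunctorTrans F φ u).app x).left = F.map ((Grothendieck.ιNatTrans u).app x) :=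
  rfl

def ofFunctor : GammaLeftTransformation p X where
  app := ofFunctorApp F φ
  trans := ofFunctorTrans F φ
  trans_id i := by
    ext x
    rw [ofFunctorTrans_app_left, Grothendieck.ιNatTrans_id_app, eqToHom_map, eqToHom_app,
      CostructuredArrow.eqToHom_left]
    rfl
  trans_comp u v := by
    ext x
    simp only [NatTrans.comp_app, eqToHom_app, CostructuredArrow.comp_left,
      CostructuredArrow.eqToHom_left, Functor.whiskerRight_app, Functor.whiskerLeft_app,
      ofFunctorTrans_app_left, CostructuredArrow.map_map_left, Grothendieck.ιNatTrans_comp_app,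
      Functor.map_comp, eqToHom_map, eqToHom_refl, Category.assoc, Category.id_comp]
    rfl

end ofFunctor

section toFunctor

variable (T : GammaLeftTransformation p X)

def transLeft {i j : I} (u : i ⟶ j) :
    T.app i ⋙ CostructuredArrow.proj p i ⟶
      (X.map u).toFunctor ⋙ T.app j ⋙ CostructuredArrow.proj p j where
  app x := ((T.trans u).app x).left
  naturality _ _ g := congrArg CommaMorphism.left ((T.trans u).naturality g)

lemma transLeft_id (i : I) : T.transLeft (𝟙 i) = eqToHom (by rw [X.map_id]; rfl) := by
  ext x
  simp only [transLeft, T.trans_id, eqToHom_app, CostructuredArrow.eqToHom_left]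
  rfl

lemma transLeft_comp {i j l : I} (u : i ⟶ j) (v : j ⟶ l) :
    T.transLeft (u ≫ v) =
      T.transLeft u ≫ Functor.whiskerLeft (X.map u).toFunctor (T.transLeft v) ≫
        eqToHom (by rw [X.map_comp]; rfl) := by
  ext x
  simp only [transLeft, T.trans_comp, NatTrans.comp_app, eqToHom_app, Functor.whiskerRight_app,
    Functor.whiskerLeft_app, CostructuredArrow.comp_left, CostructuredArrow.eqToHom_left,
    CostructuredArrow.map_map_left, eqToHom_refl, Category.id_comp]
  rfl

def toFunctor : Grothendieck X ⥤ E :=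
  Grothendieck.functorFrom (fun i => T.app i ⋙ CostructuredArrow.proj p i) T.transLeft
    T.transLeft_id (fun _ _ _ => T.transLeft_comp)

lemma toFunctor_map_ι_map {i : I} {x y : X.obj i} (g : x ⟶ y) :
    T.toFunctor.map ((Grothendieck.ι X i).map g) = ((T.app i).map g).left := by
  change (T.transLeft (𝟙 i)).app x ≫ ((T.app i).map (eqToHom _ ≫ g)).left = _
  simp only [T.transLeft_id, eqToHom_app, CategoryTheory.Functor.map_comp, eqToHom_map,
    CostructuredArrow.comp_left, CostructuredArrow.eqToHom_left]
  erw [eqToHom_trans_assoc, eqToHom_refl, Category.id_comp]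

lemma toFunctor_map_ιNatTrans_app {i j : I} (u : i ⟶ j) (x : X.obj i) :
    T.toFunctor.map ((Grothendieck.ιNatTrans u).app x) = ((T.trans u).app x).left := by
  change ((T.trans u).app x).left ≫ (T.app j ⋙ CostructuredArrow.proj p j).map (𝟙 _) = _
  rw [CategoryTheory.Functor.map_id]
  exact Category.comp_id _

def arrow : T.toFunctor ⋙ p ⟶ Grothendieck.forget X where
  app a := ((T.app a.base).obj a.fiber).hom
  naturality a b f := by
    change p.map (((T.trans f.base).app a.fiber).left ≫ ((T.app b.base).map f.fiber).left) ≫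
      ((T.app b.base).obj b.fiber).hom = ((T.app a.base).obj a.fiber).hom ≫ f.base
    rw [p.map_comp, Category.assoc, CostructuredArrow.w]
    exact CostructuredArrow.w ((T.trans f.base).app a.fiber)

lemma ofFunctor_toFunctor_app (i : I) : (ofFunctor T.toFunctor T.arrow).app i = T.app i := by
  refine CategoryTheory.Functor.ext (fun x => rfl) (fun x y g => ?_)
  erw [eqToHom_refl, eqToHom_refl, Category.id_comp, Category.comp_id]
  ext
  exact T.toFunctor_map_ι_map g

lemma ofFunctor_toFunctor : ofFunctor T.toFunctor T.arrow = T := by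
  refine ext (funext T.ofFunctor_toFunctor_app) (fun u => ?_)
  ext x
  simp only [NatTrans.comp_app, eqToHom_app, CostructuredArrow.comp_left,
    CostructuredArrow.eqToHom_left]
  erw [eqToHom_refl, eqToHom_refl, Category.id_comp, Category.comp_id]
  exact T.toFunctor_map_ιNatTrans_app u x

end toFunctor

lemma toFunctor_ofFunctor (F : Grothendieck X ⥤ E) (φ : F ⋙ p ⟶ Grothendieck.forget X) :
    (⟨(ofFunctor F φ).toFunctor, (ofFunctor F φ).arrow⟩ :
      Σ F : Grothendieck X ⥤ E, F ⋙ p ⟶ Grothendieck.forget X) = ⟨F, φ⟩ := by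
  refine Sigma.natTrans_ext
    (CategoryTheory.Functor.ext (fun _ => rfl) (fun a b f => ?_)) (fun _ => ?_)
  · erw [eqToHom_refl, eqToHom_refl, Category.id_comp, Category.comp_id]
    change F.map ((Grothendieck.ιNatTrans f.base).app a.fiber) ≫
      F.map ((Grothendieck.ι X b.base).map f.fiber) = F.map f
    rw [← F.map_comp]
    exact congrArg F.map (Grothendieck.ιNatTrans_app_comp_ι_map f)
  · erw [eqToHom_refl, Category.id_comp]
    rfl

end GammaLeftTransformation

/-- The object part of the adjunction between the Grothendieck construction and the
comma-category functor `Γ`: pairs of a functor `F : Grothendieck X ⥤ E` and a natural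
transformation `F ⋙ p ⟶ Grothendieck.forget X` correspond bijectively to left
transformations from `X` to `Γ(p) = (i ↦ p ↓ i)`. -/
theorem grothendieck_hom_equiv_gamma_transformations
    (p : E ⥤ I) (X : I ⥤ Cat.{v₃, u₃}) :
    Nonempty ((Σ F : Grothendieck X ⥤ E, (F ⋙ p ⟶ Grothendieck.forget X)) ≃
      GammaLeftTransformation p X) :=
  ⟨{ toFun := fun Fφ => GammaLeftTransformation.ofFunctor Fφ.1 Fφ.2
     invFun := fun T => ⟨T.toFunctor, T.arrow⟩
     left_inv := fun ⟨F, φ⟩ => GammaLeftTransformation.toFunctor_ofFunctor F φ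
     right_inv := GammaLeftTransformation.ofFunctor_toFunctor }⟩
end

section
/- Let I be a small category, X : I ⥤ Cat a (strict) functor, and A any category. There is an equivalence of categories between the functor category (Grothendieck X) ⥤ A and the category LT(X, A) of left transformations from X to the constant diagram at A: the objects of LT(X, A) are families consisting of a functor η_i : X.obj i ⥤ A for every object i of I together with a natural transformation γ_u : η_i ⟶ X.map u ⋙ η_j for every morphism u : i ⟶ j of I, such that γ_{𝟙_i} is the identity (modulo the identification X.map (𝟙 i) = 𝟙) and γ_{u ≫ v} equals the pasting composite of γ_u and γ_v for composable u, v (modulo the identification X.map (u ≫ v) = X.map u ⋙ X.map v); a morphism (η, γ) → (η', γ') in LT(X, A) is a family of natural transformations θ_i : η_i ⟶ η'_i such that for every u : i ⟶ j the square formed by γ_u, γ'_u, θ_i and the whiskering of θ_j by X.map u commutes. (This is the statement that the Grothendieck construction is left 2-adjoint to the diagonal, specialized to ordinary categories.) -/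
/-!
Every morphism `(u, f) : (i, x) ⟶ (j, y)` of `Grothendieck X` factors as `(u, 𝟙) ≫ (𝟙, f)`, the
first factor being a component of the canonical 2-cell `ιNatTrans u : ι i ⟶ X.map u ⋙ ι j`.
Hence a functor `F` out of `Grothendieck X` is determined by its restrictions `ι i ⋙ F` to the
fibres together with the whiskerings of these 2-cells by `F`, and the functoriality of `F` on
the factorisations is exactly the unit and cocycle condition of a left transformation.
Conversely, `Grothendieck.functorFrom` glues a left transformation back into a functor, and both
round trips are the identity on components.
-/

open CategoryTheory

universe v u v₁ u₁ v₂ u₂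

variable {I : Type u₁} [Category.{v₁} I]

/-- A left transformation from a functor `X : I ⥤ Cat` to the constant diagram at a
category `A`: a family of functors `η i : X.obj i ⥤ A` together with natural
transformations `γ u : η i ⟶ X.map u ⋙ η j` for every `u : i ⟶ j`, such that `γ (𝟙 i)`
is the identity (modulo the identification `X.map (𝟙 i) = 𝟭`) and `γ (u ≫ v)` is the
pasting composite of `γ u` and `γ v` (modulo the identification
`X.map (u ≫ v) = X.map u ⋙ X.map v`). -/
structure LeftTransformationToConst (X : I ⥤ Cat.{v₂, u₂}) (A : Type u) [Category.{v} A] where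
  app : ∀ i : I, X.obj i ⥤ A
  trans : ∀ {i j : I} (u : i ⟶ j), app i ⟶ (X.map u).toFunctor ⋙ app j
  trans_id : ∀ i : I,
    trans (𝟙 i) = eqToHom (by rw [X.map_id]; exact (Functor.id_comp _).symm)
  trans_comp : ∀ {i j l : I} (u : i ⟶ j) (v : j ⟶ l),
    trans (u ≫ v) = trans u ≫ Functor.whiskerLeft (X.map u).toFunctor (trans v) ≫
      eqToHom (by rw [X.map_comp]; exact (Functor.assoc _ _ _).symm)

namespace LeftTransformationToConst

variable {X : I ⥤ Cat.{v₂, u₂}} {A : Type u} [Category.{v} A]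

/-- A morphism of left transformations: a family of natural transformations
`θ i : η i ⟶ η' i` commuting with the structure 2-cells. -/
@[ext]
structure Hom (P Q : LeftTransformationToConst X A) where
  app : ∀ i : I, P.app i ⟶ Q.app i
  compat : ∀ {i j : I} (u : i ⟶ j),
    P.trans u ≫ Functor.whiskerLeft (X.map u).toFunctor (app j) = app i ≫ Q.trans u

/-- The category of left transformations from `X` to the constant diagram at `A`. -/
instance : Category (LeftTransformationToConst X A) where
  Hom := Hom
  id P :=
    { app := fun i => 𝟙 (P.app i)
      compat := by intro i j u; simp }
  comp {P Q R} f g :=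
    { app := fun i => f.app i ≫ g.app i
      compat := by
        intro i j u
        rw [Functor.whiskerLeft_comp, ← Category.assoc, f.compat u, Category.assoc, g.compat u,
          ← Category.assoc] }
  id_comp f := by apply Hom.ext; funext i; exact Category.id_comp _
  comp_id f := by apply Hom.ext; funext i; exact Category.comp_id _
  assoc f g h := by apply Hom.ext; funext i; exact Category.assoc _ _ _

end LeftTransformationToConst

namespace CategoryTheory.Grothendieck

variable {X : I ⥤ Cat.{v₂, u₂}}

/- The fibre of an object of `Grothendieck X` over `i` carries the category structure of
`X.obj i` only up to unfolding, so `rw` and `simp` often miss `map_id`, `comp_id`, … here and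
`erw` is needed. -/

lemma ιNatTrans_id_app_s1 (i : I) (d : X.obj i) :
    (ιNatTrans (F := X) (𝟙 i)).app d = eqToHom (by simp) := by
  rw [eqToHom_eq]
  refine Grothendieck.ext _ _ rfl ?_
  erw [ιNatTrans_app_fiber, Category.comp_id]
  rfl

lemma ιNatTrans_comp_app_s1 {i j l : I} (u : i ⟶ j) (v : j ⟶ l) (d : X.obj i) :
    (ιNatTrans (F := X) (u ≫ v)).app d =
      (ιNatTrans u).app d ≫ (ιNatTrans v).app ((X.map u).toFunctor.obj d) ≫
        eqToHom (by simp) := by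
  rw [eqToHom_eq]
  refine Grothendieck.ext _ _ (by simp; erw [eqToHom_refl, Category.comp_id]; rfl) ?_
  simp only [comp_fiber, ιNatTrans_app_fiber]
  erw [Functor.map_id (self := (X.map _).toFunctor), Functor.map_id (self := (X.map _).toFunctor),
    Category.comp_id, Category.id_comp, Category.id_comp, eqToHom_trans, eqToHom_trans]
  rfl

lemma ιNatTrans_app_comp_ι_map_s1 {x y : Grothendieck X} (f : x ⟶ y) :
    (ιNatTrans f.base).app x.fiber ≫ (ι X y.base).map f.fiber = f := by
  refine Grothendieck.ext _ _ (Category.comp_id _) ?_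
  simp only [comp_fiber, ιNatTrans_app_fiber]
  erw [(X.map (𝟙 y.base)).toFunctor.map_id, Category.id_comp, eqToHom_trans_assoc,
    eqToHom_trans_assoc, eqToHom_refl, Category.id_comp]

end CategoryTheory.Grothendieck

namespace LeftTransformationToConst

open Grothendieck Functor

variable {X : I ⥤ Cat.{v₂, u₂}} {A : Type u} [Category.{v} A]

@[simp]
lemma id_app (P : LeftTransformationToConst X A) (i : I) : (𝟙 P : P ⟶ P).app i = 𝟙 _ :=
  rfl

@[simp]
lemma comp_app {P Q R : LeftTransformationToConst X A} (f : P ⟶ Q) (g : Q ⟶ R) (i : I) :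
    (f ≫ g).app i = f.app i ≫ g.app i :=
  rfl

@[ext]
lemma hom_ext {P Q : LeftTransformationToConst X A} {f g : P ⟶ Q} (h : ∀ i, f.app i = g.app i) :
    f = g :=
  Hom.ext (funext h)

lemma Hom.compat_app {P Q : LeftTransformationToConst X A} (θ : P ⟶ Q) {i j : I} (u : i ⟶ j)
    (d : X.obj i) :
    (P.trans u).app d ≫ (θ.app j).app ((X.map u).toFunctor.obj d) =
      (θ.app i).app d ≫ (Q.trans u).app d :=
  NatTrans.congr_app (θ.compat u) d

def isoMk {P Q : LeftTransformationToConst X A} (e : ∀ i, P.app i ≅ Q.app i)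
    (compat : ∀ {i j : I} (u : i ⟶ j),
      P.trans u ≫ whiskerLeft (X.map u).toFunctor (e j).hom = (e i).hom ≫ Q.trans u) :
    P ≅ Q where
  hom := ⟨fun i => (e i).hom, compat⟩
  inv := ⟨fun i => (e i).inv, fun {i j} u => by
    rw [← cancel_epi (e i).hom, ← Category.assoc, ← compat, Category.assoc,
      ← whiskerLeft_comp, Iso.hom_inv_id, whiskerLeft_id', Category.comp_id, Iso.hom_inv_id_assoc]⟩

def ofFunctor (F : Grothendieck X ⥤ A) : LeftTransformationToConst X A where
  app i := ι X i ⋙ F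
  trans u := whiskerRight (ιNatTrans u) F
  trans_id i := by
    ext d
    simp [ιNatTrans_id_app_s1, eqToHom_map]
  trans_comp u v := by
    ext d
    simp [ιNatTrans_comp_app_s1, eqToHom_map]

def functorFrom (P : LeftTransformationToConst X A) : Grothendieck X ⥤ A :=
  Grothendieck.functorFrom P.app P.trans P.trans_id (fun _ _ _ => P.trans_comp)

@[simp]
lemma functorFrom_obj (P : LeftTransformationToConst X A) (x : Grothendieck X) :
    P.functorFrom.obj x = (P.app x.base).obj x.fiber :=
  rfl

@[simp]
lemma functorFrom_map (P : LeftTransformationToConst X A) {x y : Grothendieck X} (f : x ⟶ y) :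
    P.functorFrom.map f = (P.trans f.base).app x.fiber ≫ (P.app y.base).map f.fiber :=
  rfl

lemma functorFrom_map_ιNatTrans_app (P : LeftTransformationToConst X A) {i j : I} (u : i ⟶ j)
    (d : X.obj i) : P.functorFrom.map ((ιNatTrans u).app d) = (P.trans u).app d :=
  (congrArg ((P.trans u).app d ≫ ·) ((P.app j).map_id _)).trans (Category.comp_id _)

def ofFunctorFunctor : (Grothendieck X ⥤ A) ⥤ LeftTransformationToConst X A where
  obj := ofFunctor
  map α := ⟨fun i => whiskerLeft (ι X i) α, fun u => by ext d; exact α.naturality _⟩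

def functorFromFunctor : LeftTransformationToConst X A ⥤ (Grothendieck X ⥤ A) where
  obj := functorFrom
  map θ :=
    { app x := (θ.app x.base).app x.fiber
      naturality x y f := by
        dsimp only [functorFrom_obj, functorFrom_map]
        rw [Category.assoc, NatTrans.naturality, ← Category.assoc, Hom.compat_app,
          Category.assoc] }

lemma ofFunctor_functorFrom_map (F : Grothendieck X ⥤ A) {x y : Grothendieck X} (f : x ⟶ y) :
    (ofFunctor F).functorFrom.map f = F.map f :=
  (F.map_comp _ _).symm.trans (congrArg F.map (ιNatTrans_app_comp_ι_map_s1 f))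

def isoFunctorFromOfFunctor (F : Grothendieck X ⥤ A) : F ≅ (ofFunctor F).functorFrom :=
  NatIso.ofComponents (fun _ => Iso.refl _) fun f =>
    (Category.comp_id _).trans
      ((ofFunctor_functorFrom_map F f).symm.trans (Category.id_comp _).symm)

def ofFunctorFunctorFromIso (P : LeftTransformationToConst X A) : ofFunctor P.functorFrom ≅ P :=
  isoMk (fun i => ιCompFunctorFrom _ _ P.trans_id (fun _ _ _ => P.trans_comp) i) fun u => by
    ext d
    exact (Category.comp_id _).trans
      ((functorFrom_map_ιNatTrans_app P u d).trans (Category.id_comp _).symm)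

def grothendieckFunctorEquiv : (Grothendieck X ⥤ A) ≌ LeftTransformationToConst X A :=
  CategoryTheory.Equivalence.mk ofFunctorFunctor functorFromFunctor
    (NatIso.ofComponents isoFunctorFromOfFunctor fun _ => by
      ext
      exact (Category.comp_id _).trans (Category.id_comp _).symm)
    (NatIso.ofComponents ofFunctorFunctorFromIso fun _ => by
      ext
      exact (Category.comp_id _).trans (Category.id_comp _).symm)

end LeftTransformationToConst

/-- The Grothendieck construction is left 2-adjoint to the diagonal: the functor category
`Grothendieck X ⥤ A` is equivalent to the category of left transformations from `X` to
the constant diagram at `A`. -/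
theorem grothendieck_functor_category_equiv_leftTransformations
    (X : I ⥤ Cat.{v₂, u₂}) (A : Type u) [Category.{v} A] :
    Nonempty ((Grothendieck X ⥤ A) ≌ LeftTransformationToConst X A) :=
  ⟨LeftTransformationToConst.grothendieckFunctorEquiv⟩
end

section
/- Let k be a commutative ring, G a group, and A a k-algebra. The assignment sending a G-grading 𝒜 of A to the k-linear map ρ_𝒜 : A → A ⊗[k] MonoidAlgebra k G defined by ρ_𝒜(a) = Σ_{g ∈ G} (the 𝒜 g-component of a) ⊗ₜ single g 1 is a bijection from the set of G-gradings of A (pairs of a family 𝒜 : G → Submodule k A together with graded-algebra data making A internally graded by 𝒜) onto the set of comodule-algebra structures on A over MonoidAlgebra k G. -/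
/-! A grading `𝒜` gives the coaction `a ↦ a ⊗ g` on `𝒜 g`, extended linearly: it is multiplicative
because `𝒜 g * 𝒜 h ⊆ 𝒜 (g * h)`, and counital and coassociative because group elements are
grouplike. Conversely, write a coaction as `ρ a = Σ a_g ⊗ g`. Counitality says `a = Σ a_g`, and
coassociativity, compared coefficient by coefficient, says `ρ a_g = a_g ⊗ g`; hence the subspaces
`{a | ρ a = a ⊗ g}` form a grading. The two constructions are mutually inverse because a linear map
out of an internal direct sum is determined on homogeneous elements, and an internal direct sum
decomposition cannot be enlarged degreewise to a different one. -/

open TensorProduct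

noncomputable section

variable (k G A : Type*) [CommRing k] [Group G] [DecidableEq G] [Ring A] [Algebra k A]

/-- The counit of the standard bialgebra structure on the group algebra `k[G]`:
it is the `k`-linear map with `counit (single g r) = r`; in particular
`counit (single g 1) = 1`, so that every group element is grouplike. -/
def gaCounit : MonoidAlgebra k G →ₗ[k] k :=
  Finsupp.lsum k (fun _ => LinearMap.id) ∘ₗ (MonoidAlgebra.coeffLinearEquiv k).toLinearMap

/-- The comultiplication of the standard bialgebra structure on the group algebra `k[G]`:
it is the `k`-linear map with `comul (single g r) = r • (single g 1 ⊗ₜ single g 1)`;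
in particular `comul (single g 1) = single g 1 ⊗ₜ single g 1`, so that every group
element is grouplike. -/
def gaComul : MonoidAlgebra k G →ₗ[k] MonoidAlgebra k G ⊗[k] MonoidAlgebra k G :=
  Finsupp.lsum k (fun g =>
    LinearMap.toSpanSingleton k (MonoidAlgebra k G ⊗[k] MonoidAlgebra k G)
      (MonoidAlgebra.single g (1 : k) ⊗ₜ[k] MonoidAlgebra.single g (1 : k))) ∘ₗ
    (MonoidAlgebra.coeffLinearEquiv k).toLinearMap

/-- A `G`-grading of the `k`-algebra `A`: a family `𝒜 : G → Submodule k A` forming an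
internal direct sum decomposition of `A` with `1 ∈ 𝒜 1` and `𝒜 g * 𝒜 h ⊆ 𝒜 (g * h)`. -/
structure GroupGrading where
  grading : G → Submodule k A
  decomposition : DirectSum.Decomposition grading
  one_mem : (1 : A) ∈ grading 1
  mul_mem : ∀ {g h : G} {x y : A}, x ∈ grading g → y ∈ grading h → x * y ∈ grading (g * h)

/-- The map `ρ_𝒜 : A → A ⊗[k] k[G]` associated to a grading `𝒜`, defined by
`ρ_𝒜 a = Σ_{g ∈ G} (the 𝒜 g-component of a) ⊗ₜ single g 1`. -/
def rhoOf (𝒜 : GroupGrading k G A) : A → A ⊗[k] MonoidAlgebra k G :=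
  letI := 𝒜.decomposition
  fun a => ∑ᶠ g : G, ((DirectSum.decompose 𝒜.grading a) g : A) ⊗ₜ[k] MonoidAlgebra.single g 1

end

namespace TensorProduct

variable {k G : Type*} [CommRing k] [DecidableEq G]
variable (k G) in
noncomputable def monoidAlgebraScalarRight (M : Type*) [AddCommMonoid M] [Module k M] :
    M ⊗[k] MonoidAlgebra k G ≃ₗ[k] (G →₀ M) :=
  (congr (LinearEquiv.refl k M) (MonoidAlgebra.coeffLinearEquiv k)).trans
    (finsuppScalarRight k k M G)

variable {M N : Type*} [AddCommMonoid M] [Module k M] [AddCommMonoid N] [Module k N]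

@[simp]
theorem monoidAlgebraScalarRight_tmul_single (m : M) (g : G) (r : k) :
    monoidAlgebraScalarRight k G M (m ⊗ₜ MonoidAlgebra.single g r) = Finsupp.single g (r • m) := by
  ext h
  simp [monoidAlgebraScalarRight, MonoidAlgebra.coeff_single, Finsupp.single_apply]

@[simp]
theorem monoidAlgebraScalarRight_symm_single (g : G) (m : M) :
    (monoidAlgebraScalarRight k G M).symm (Finsupp.single g m) = m ⊗ₜ MonoidAlgebra.single g 1 := by
  simp [monoidAlgebraScalarRight]

theorem sum_monoidAlgebraScalarRight (t : M ⊗[k] MonoidAlgebra k G) :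
    ((monoidAlgebraScalarRight k G M t).sum fun g m => m ⊗ₜ MonoidAlgebra.single g 1) = t := by
  conv_rhs => rw [← (monoidAlgebraScalarRight k G M).symm_apply_apply t,
    ← Finsupp.sum_single (monoidAlgebraScalarRight k G M t), map_finsuppSum]
  simp

theorem monoidAlgebraScalarRight_map (f : M →ₗ[k] N) (t : M ⊗[k] MonoidAlgebra k G) (g : G) :
    monoidAlgebraScalarRight k G N (map f LinearMap.id t) g =
      f (monoidAlgebraScalarRight k G M t g) := by
  induction t using TensorProduct.induction_on with
  | zero => simp
  | tmul m p => simp [monoidAlgebraScalarRight]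
  | add x y hx hy => simp [hx, hy]

end TensorProduct

section GroupAlgebra

variable {k G : Type*} [CommRing k]

@[simp]
theorem gaCounit_single (g : G) (r : k) : gaCounit k G (MonoidAlgebra.single g r) = r := by
  simp [gaCounit]

@[simp]
theorem gaComul_single (g : G) :
    gaComul k G (MonoidAlgebra.single g 1) =
      MonoidAlgebra.single g 1 ⊗ₜ[k] MonoidAlgebra.single g 1 := by
  simp [gaComul]

variable [DecidableEq G] {M : Type*} [AddCommMonoid M] [Module k M]

theorem rid_map_gaCounit (t : M ⊗[k] MonoidAlgebra k G) :
    TensorProduct.rid k M (map LinearMap.id (gaCounit k G) t) =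
      (monoidAlgebraScalarRight k G M t).sum fun _ m => m := by
  conv_lhs => rw [← sum_monoidAlgebraScalarRight t]
  simp [map_finsuppSum]

theorem monoidAlgebraScalarRight_assoc_symm_map_gaComul (t : M ⊗[k] MonoidAlgebra k G) (g : G) :
    monoidAlgebraScalarRight k G (M ⊗[k] MonoidAlgebra k G)
        ((TensorProduct.assoc k M _ _).symm (map LinearMap.id (gaComul k G) t)) g =
      monoidAlgebraScalarRight k G M t g ⊗ₜ MonoidAlgebra.single g 1 := by
  conv_lhs => rw [← sum_monoidAlgebraScalarRight t]
  simp +contextual [map_finsuppSum, Finsupp.sum_apply, Finsupp.single_apply]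

end GroupAlgebra

namespace DirectSum

variable {ι R M : Type*} [DecidableEq ι] [Semiring R] [AddCommMonoid M] [Module R M]
  {N : ι → Submodule R M}

theorem IsInternal.linearMap_ext {P : Type*} [AddCommMonoid P] [Module R P] (h : IsInternal N)
    {f f' : M →ₗ[R] P} (hf : ∀ i, ∀ m ∈ N i, f m = f' m) : f = f' := by
  ext m
  obtain ⟨x, rfl⟩ := h.2 m
  induction x using DirectSum.induction_on with
  | zero => simp
  | of i m => simpa using hf i m m.2
  | add x y hx hy => simp only [map_add, hx, hy]

theorem isInternal_of_coeffs (c : M →ₗ[R] ι →₀ M)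
    (hc_single : ∀ i, ∀ m ∈ N i, c m = Finsupp.single i m) (hc_mem : ∀ m i, c m i ∈ N i)
    (hc_sum : ∀ m, (c m).sum (fun _ x => x) = m) : IsInternal N := by
  have hc (x : ⨁ i, N i) (i : ι) : c (coeLinearMap N x) i = x i := by
    induction x using DirectSum.induction_on with
    | zero => simp
    | of j m =>
      rw [coeLinearMap_of, hc_single j m m.2, Finsupp.single_apply, coe_of_apply]
      split_ifs <;> rfl
    | add x y hx hy => simp [hx, hy]
  refine ⟨fun x y hxy => DFinsupp.ext fun i => Subtype.ext ?_, fun m => ?_⟩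
  · rw [← hc x i, ← hc y i]
    exact congrArg (c · i) hxy
  · have hm : m ∈ iSup N := by
      rw [← hc_sum m]
      refine Submodule.finsuppSum_mem _ _ _ _ ?_
      intro i _
      exact Submodule.mem_iSup_of_mem i (hc_mem m i)
    rwa [← range_coeLinearMap] at hm

end DirectSum

section Comodule

variable {k G M : Type*} [CommRing k] [AddCommMonoid M] [Module k M]
  (ρ : M →ₗ[k] M ⊗[k] MonoidAlgebra k G)

noncomputable def homogeneousPart (g : G) : Submodule k M :=
  LinearMap.eqLocus ρ ((TensorProduct.mk k M _).flip (MonoidAlgebra.single g 1))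

variable {ρ}

theorem mem_homogeneousPart {g : G} {m : M} :
    m ∈ homogeneousPart ρ g ↔ ρ m = m ⊗ₜ MonoidAlgebra.single g 1 :=
  Iff.rfl

variable [DecidableEq G]

theorem monoidAlgebraScalarRight_of_mem_homogeneousPart {g : G} {m : M}
    (hm : m ∈ homogeneousPart ρ g) : monoidAlgebraScalarRight k G M (ρ m) = Finsupp.single g m := by
  rw [mem_homogeneousPart.1 hm, monoidAlgebraScalarRight_tmul_single, one_smul]

theorem sum_monoidAlgebraScalarRight_of_counit
    (hcu : map LinearMap.id (gaCounit k G) ∘ₗ ρ = (TensorProduct.rid k M).symm.toLinearMap)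
    (m : M) : ((monoidAlgebraScalarRight k G M (ρ m)).sum fun _ x => x) = m := by
  rw [← rid_map_gaCounit, ← LinearMap.comp_apply (map _ _), hcu]
  simp

theorem monoidAlgebraScalarRight_mem_homogeneousPart
    (hco : map ρ LinearMap.id ∘ₗ ρ = (TensorProduct.assoc k M _ _).symm.toLinearMap ∘ₗ
      map LinearMap.id (gaComul k G) ∘ₗ ρ)
    (m : M) (g : G) : monoidAlgebraScalarRight k G M (ρ m) g ∈ homogeneousPart ρ g := by
  have h := congrArg (monoidAlgebraScalarRight k G _ · g) (LinearMap.congr_fun hco m)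
  exact mem_homogeneousPart.2 <| by
    simpa [monoidAlgebraScalarRight_map, monoidAlgebraScalarRight_assoc_symm_map_gaComul] using h

theorem isInternal_homogeneousPart
    (hcu : map LinearMap.id (gaCounit k G) ∘ₗ ρ = (TensorProduct.rid k M).symm.toLinearMap)
    (hco : map ρ LinearMap.id ∘ₗ ρ = (TensorProduct.assoc k M _ _).symm.toLinearMap ∘ₗ
      map LinearMap.id (gaComul k G) ∘ₗ ρ) :
    DirectSum.IsInternal (homogeneousPart ρ) :=
  DirectSum.isInternal_of_coeffs ((monoidAlgebraScalarRight k G M).toLinearMap ∘ₗ ρ)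
    (fun _ _ => monoidAlgebraScalarRight_of_mem_homogeneousPart)
    (monoidAlgebraScalarRight_mem_homogeneousPart hco)
    (sum_monoidAlgebraScalarRight_of_counit hcu)

end Comodule

section ComoduleAlgebra

variable {k G A : Type*} [CommRing k] [Monoid G] [Semiring A] [Algebra k A]
  (ρ : A →ₐ[k] A ⊗[k] MonoidAlgebra k G)

theorem one_mem_homogeneousPart : (1 : A) ∈ homogeneousPart ρ.toLinearMap 1 := by
  rw [mem_homogeneousPart, AlgHom.toLinearMap_apply, map_one, Algebra.TensorProduct.one_def,
    MonoidAlgebra.one_def]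

theorem mul_mem_homogeneousPart {g h : G} {a b : A} (ha : a ∈ homogeneousPart ρ.toLinearMap g)
    (hb : b ∈ homogeneousPart ρ.toLinearMap h) : a * b ∈ homogeneousPart ρ.toLinearMap (g * h) := by
  simp only [mem_homogeneousPart, AlgHom.toLinearMap_apply] at ha hb ⊢
  rw [map_mul, ha, hb, Algebra.TensorProduct.tmul_mul_tmul, MonoidAlgebra.single_mul_single,
    one_mul]

end ComoduleAlgebra

namespace GroupGrading

variable {k G A : Type*} [CommRing k] [Group G] [DecidableEq G] [Ring A] [Algebra k A]

instance (𝒜 : GroupGrading k G A) : DirectSum.Decomposition 𝒜.grading :=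
  𝒜.decomposition

theorem isInternal (𝒜 : GroupGrading k G A) : DirectSum.IsInternal 𝒜.grading :=
  DirectSum.Decomposition.isInternal _

@[ext]
theorem ext {𝒜 ℬ : GroupGrading k G A} (h : 𝒜.grading = ℬ.grading) : 𝒜 = ℬ := by
  obtain ⟨_, _, _, _⟩ := 𝒜
  obtain ⟨_, _, _, _⟩ := ℬ
  cases h
  congr
  exact Subsingleton.elim _ _

variable (𝒜 : GroupGrading k G A)

noncomputable def coaction : A →ₗ[k] A ⊗[k] MonoidAlgebra k G :=
  DirectSum.toModule k G _ (fun g =>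
      (TensorProduct.mk k A _).flip (MonoidAlgebra.single g 1) ∘ₗ (𝒜.grading g).subtype) ∘ₗ
    (DirectSum.decomposeLinearEquiv 𝒜.grading).toLinearMap

variable {𝒜}

theorem coaction_of_mem {g : G} {a : A} (ha : a ∈ 𝒜.grading g) :
    𝒜.coaction a = a ⊗ₜ MonoidAlgebra.single g 1 := by
  rw [coaction, LinearMap.comp_apply, LinearEquiv.coe_coe, DirectSum.decomposeLinearEquiv_apply,
    DirectSum.decompose_of_mem _ ha, ← DirectSum.lof_eq_of k, DirectSum.toModule_lof]
  rfl

variable (𝒜)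

theorem coe_coaction : ⇑𝒜.coaction = rhoOf k G A 𝒜 := by
  classical
  ext a
  have hsupp : (Function.support fun g =>
      ((DirectSum.decompose 𝒜.grading a) g : A) ⊗ₜ[k] MonoidAlgebra.single g (1 : k)) ⊆
      (DirectSum.decompose 𝒜.grading a).support := by
    intro g hg
    contrapose! hg
    simp [DFinsupp.notMem_support_iff.1 hg]
  rw [rhoOf, finsum_eq_sum_of_support_subset _ hsupp]
  conv_lhs => rw [← DirectSum.sum_support_decompose 𝒜.grading a]
  rw [map_sum]
  exact Finset.sum_congr rfl fun g _ => coaction_of_mem (Submodule.coe_mem _)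

theorem coaction_mul (a b : A) : 𝒜.coaction (a * b) = 𝒜.coaction a * 𝒜.coaction b := by
  suffices (LinearMap.mul k A).compr₂ 𝒜.coaction =
      (LinearMap.mul k (A ⊗[k] MonoidAlgebra k G)).compl₁₂ 𝒜.coaction 𝒜.coaction from
    LinearMap.congr_fun₂ this a b
  refine 𝒜.isInternal.linearMap_ext fun g a ha => 𝒜.isInternal.linearMap_ext fun h b hb => ?_
  simp [coaction_of_mem ha, coaction_of_mem hb, coaction_of_mem (𝒜.mul_mem ha hb),
    Algebra.TensorProduct.tmul_mul_tmul, MonoidAlgebra.single_mul_single]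

noncomputable def coactionAlgHom : A →ₐ[k] A ⊗[k] MonoidAlgebra k G :=
  AlgHom.ofLinearMap 𝒜.coaction
    (by rw [coaction_of_mem 𝒜.one_mem, Algebra.TensorProduct.one_def, MonoidAlgebra.one_def])
    𝒜.coaction_mul

theorem map_gaCounit_comp_coaction :
    map LinearMap.id (gaCounit k G) ∘ₗ 𝒜.coaction = (TensorProduct.rid k A).symm.toLinearMap :=
  𝒜.isInternal.linearMap_ext fun g a ha => by simp [coaction_of_mem ha]

theorem map_coaction_comp_coaction :
    map 𝒜.coaction LinearMap.id ∘ₗ 𝒜.coaction =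
      (TensorProduct.assoc k A _ _).symm.toLinearMap ∘ₗ
        map LinearMap.id (gaComul k G) ∘ₗ 𝒜.coaction :=
  𝒜.isInternal.linearMap_ext fun g a ha => by simp [coaction_of_mem ha]

variable (ρ : A →ₐ[k] A ⊗[k] MonoidAlgebra k G)
  (hcu : map LinearMap.id (gaCounit k G) ∘ₗ ρ.toLinearMap =
    (TensorProduct.rid k A).symm.toLinearMap)
  (hco : map ρ.toLinearMap LinearMap.id ∘ₗ ρ.toLinearMap =
    (TensorProduct.assoc k A _ _).symm.toLinearMap ∘ₗ
      map LinearMap.id (gaComul k G) ∘ₗ ρ.toLinearMap)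

noncomputable def ofCoaction : GroupGrading k G A where
  grading := homogeneousPart ρ.toLinearMap
  decomposition := (isInternal_homogeneousPart hcu hco).chooseDecomposition
  one_mem := one_mem_homogeneousPart ρ
  mul_mem := mul_mem_homogeneousPart ρ

theorem coaction_ofCoaction : (ofCoaction ρ hcu hco).coaction = ρ.toLinearMap :=
  (ofCoaction ρ hcu hco).isInternal.linearMap_ext fun _ _ ha => (coaction_of_mem ha).trans ha.symm

theorem ofCoaction_coactionAlgHom :
    ofCoaction 𝒜.coactionAlgHom 𝒜.map_gaCounit_comp_coaction 𝒜.map_coaction_comp_coaction = 𝒜 :=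
  ext <| Eq.symm <| ((isInternal_homogeneousPart 𝒜.map_gaCounit_comp_coaction
    𝒜.map_coaction_comp_coaction).submodule_iSupIndep.le_iff_eq_of_iSup_eq_top
    𝒜.isInternal.submodule_iSup_eq_top).1 fun _ _ ha => coaction_of_mem ha

end GroupGrading

/-- Cohen–Montgomery: the assignment `𝒜 ↦ ρ_𝒜` is a bijection from the set of `G`-gradings
of `A` onto the set of comodule-algebra structures on `A` over the group algebra `k[G]`. -/
theorem grading_equiv_comodule_algebra_structures
    (k G A : Type*) [CommRing k] [Group G] [DecidableEq G] [Ring A] [Algebra k A] :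
    ∃ e : GroupGrading k G A ≃
        {ρ : A →ₐ[k] A ⊗[k] MonoidAlgebra k G //
          (TensorProduct.map LinearMap.id (gaCounit k G) ∘ₗ ρ.toLinearMap
            = (TensorProduct.rid k A).symm.toLinearMap) ∧
          (TensorProduct.map ρ.toLinearMap LinearMap.id ∘ₗ ρ.toLinearMap
            = (TensorProduct.assoc k A (MonoidAlgebra k G) (MonoidAlgebra k G)).symm.toLinearMap
                ∘ₗ TensorProduct.map LinearMap.id (gaComul k G) ∘ₗ ρ.toLinearMap)},
      ∀ 𝒜 : GroupGrading k G A, ⇑(e 𝒜).val = rhoOf k G A 𝒜 :=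
  ⟨{ toFun := fun 𝒜 => ⟨𝒜.coactionAlgHom, 𝒜.map_gaCounit_comp_coaction,
        𝒜.map_coaction_comp_coaction⟩
     invFun := fun ρ => .ofCoaction ρ.1 ρ.2.1 ρ.2.2
     left_inv := GroupGrading.ofCoaction_coactionAlgHom
     right_inv := fun ρ => Subtype.ext <| AlgHom.toLinearMap_injective <|
       GroupGrading.coaction_ofCoaction ρ.1 ρ.2.1 ρ.2.2 },
    GroupGrading.coe_coaction⟩
end

section
/- Let k be a commutative ring, S a type, and M a k-module. The assignment sending an S-indexed internal direct sum decomposition of M (a family ℳ : S → Submodule k M together with decomposition data exhibiting M as the internal direct sum of the ℳ s) to the k-linear map μ_ℳ : M →ₗ[k] M ⊗[k] (S →₀ k) defined by μ_ℳ(m) = Σ_{s ∈ S} (the ℳ s-component of m) ⊗ₜ single s 1 is a bijection from the set of S-indexed internal direct sum decompositions of M onto the set of counital coassociative coactions of S →₀ k on M. -/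
/-!
Under `M ⊗ (S →₀ k) ≃ (S →₀ M)` a coaction becomes a linear map `f : M → (S →₀ M)`.
Counitality says that the coefficients of `f m` add up to `m`, and, since every `single s 1`
is grouplike, coassociativity says that the `s`-th coefficient of `f m` is homogeneous of
degree `s`, i.e. lies in `Mₛ = {x | f x = single s x}`. These two facts say precisely that
`m ↦ f m` is the decomposition map of `M = ⨁ₛ Mₛ`; conversely a decomposition `ℳ` gives
`f m = (s ↦ mₛ)`, for which `{x | f x = single s x} = ℳ s`.
-/

open TensorProduct

noncomputable section

variable (k S M : Type*) [CommRing k] [DecidableEq S] [AddCommGroup M] [Module k M]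

/-- The coaction `μ_ℳ : M →ₗ[k] M ⊗[k] (S →₀ k)` associated to an internal direct sum
decomposition `ℳ` of `M`, as a plain function:
`μ_ℳ m = Σ_{s ∈ S} (the ℳ s-component of m) ⊗ₜ single s 1`. -/
def muOf (ℳ : S → Submodule k M) [DirectSum.Decomposition ℳ] : M → M ⊗[k] (S →₀ k) :=
  fun m => ∑ᶠ s : S, ((DirectSum.decompose ℳ m) s : M) ⊗ₜ[k] Finsupp.single s (1 : k)

end

noncomputable section

namespace TensorProduct

variable {k S M N : Type*} [CommRing k] [DecidableEq S] [AddCommGroup M] [Module k M]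
  [AddCommGroup N] [Module k N]

theorem map_id_counit_finsuppScalarRight_symm (g : S →₀ M) :
    map LinearMap.id Coalgebra.counit ((finsuppScalarRight k k M S).symm g) =
      (TensorProduct.rid k M).symm (g.sum fun _ x => x) := by
  induction g using Finsupp.induction_linear with
  | zero => simp
  | add g h hg hh => simp only [map_add, hg, hh, Finsupp.sum_add_index', implies_true]
  | single s x => simp

theorem finsuppScalarRight_map_id_apply (φ : M →ₗ[k] N) (t : M ⊗[k] (S →₀ k)) (s : S) :
    finsuppScalarRight k k N S (map φ LinearMap.id t) s = φ (finsuppScalarRight k k M S t s) := by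
  induction t using TensorProduct.induction_on with
  | zero => simp
  | add t u ht hu => simp only [map_add, Finsupp.add_apply, ht, hu]
  | tmul n g => simp

theorem finsuppScalarRight_assoc_symm_map_id_comul_apply (t : M ⊗[k] (S →₀ k)) (s : S) :
    finsuppScalarRight k k (M ⊗[k] (S →₀ k)) S
        ((TensorProduct.assoc k M (S →₀ k) (S →₀ k)).symm (map LinearMap.id Coalgebra.comul t)) s =
      finsuppScalarRight k k M S t s ⊗ₜ Finsupp.single s 1 := by
  induction t using TensorProduct.induction_on with
  | zero => simp
  | add t u ht hu => simp only [map_add, Finsupp.add_apply, ht, hu, add_tmul]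
  | tmul n g =>
    induction g using Finsupp.induction_linear with
    | zero => simp
    | add g h hg hh => simp only [tmul_add, map_add, Finsupp.add_apply, hg, hh, add_tmul]
    | single u a => by_cases h : u = s <;> simp [h, smul_tmul']

theorem finsuppScalarRight_symm_eq_finsum (g : S →₀ M) :
    (finsuppScalarRight k k M S).symm g = ∑ᶠ s, g s ⊗ₜ[k] Finsupp.single s (1 : k) := by
  have hsupp : (Function.support fun s => g s ⊗ₜ[k] Finsupp.single s (1 : k)) ⊆ g.support := by
    intro s hs
    contrapose! hs
    simp_all
  conv_lhs => rw [← g.sum_single]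
  rw [finsum_eq_sum_of_support_subset _ hsupp, map_finsuppSum]
  simp [Finsupp.sum]

theorem map_id_counit_comp_eq_rid_symm_iff (μ : M →ₗ[k] M ⊗[k] (S →₀ k)) :
    map LinearMap.id Coalgebra.counit ∘ₗ μ = (TensorProduct.rid k M).symm.toLinearMap ↔
      ∀ m, (finsuppScalarRight k k M S (μ m)).sum (fun _ x => x) = m := by
  simp only [LinearMap.ext_iff, LinearMap.comp_apply, LinearEquiv.coe_coe]
  refine forall_congr' fun m => ?_
  conv_lhs => rw [← (finsuppScalarRight k k M S).symm_apply_apply (μ m)]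
  rw [map_id_counit_finsuppScalarRight_symm, (TensorProduct.rid k M).symm.injective.eq_iff]

theorem map_comp_eq_assoc_symm_comp_map_id_comul_iff (μ : M →ₗ[k] M ⊗[k] (S →₀ k)) :
    map μ LinearMap.id ∘ₗ μ =
        (TensorProduct.assoc k M (S →₀ k) (S →₀ k)).symm.toLinearMap
          ∘ₗ map LinearMap.id Coalgebra.comul ∘ₗ μ ↔
      ∀ m s, μ (finsuppScalarRight k k M S (μ m) s) =
        finsuppScalarRight k k M S (μ m) s ⊗ₜ Finsupp.single s 1 := by
  simp only [LinearMap.ext_iff, LinearMap.comp_apply]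
  refine forall_congr' fun m => ?_
  rw [← (finsuppScalarRight k k (M ⊗[k] (S →₀ k)) S).injective.eq_iff, Finsupp.ext_iff]
  simp only [finsuppScalarRight_map_id_apply, finsuppScalarRight_assoc_symm_map_id_comul_apply,
    LinearEquiv.coe_coe]

end TensorProduct

namespace DirectSum

variable {k S M : Type*} [CommRing k] [AddCommGroup M] [Module k M]

structure IsGradingMap (f : M →ₗ[k] S →₀ M) : Prop where
  sum_eq : ∀ m, (f m).sum (fun _ x => x) = m
  apply_apply : ∀ m s, f (f m s) = Finsupp.single s (f m s)

def homogeneousSubmodule (f : M →ₗ[k] S →₀ M) (s : S) : Submodule k M :=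
  LinearMap.eqLocus f (Finsupp.lsingle s)

theorem mem_homogeneousSubmodule {f : M →ₗ[k] S →₀ M} {s : S} {x : M} :
    x ∈ homogeneousSubmodule f s ↔ f x = Finsupp.single s x := Iff.rfl

variable [DecidableEq S]

section gradingMap

variable (ℳ : S → Submodule k M) [Decomposition ℳ]

open Classical in
def gradingMap : M →ₗ[k] S →₀ M :=
  (finsuppLequivDFinsupp k).symm.toLinearMap ∘ₗ
    DFinsupp.mapRange.linearMap (fun s => (ℳ s).subtype) ∘ₗ (decomposeLinearEquiv ℳ).toLinearMap

@[simp]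
theorem gradingMap_apply (m : M) (s : S) : gradingMap ℳ m s = decompose ℳ m s :=
  rfl

theorem gradingMap_of_mem {s : S} {x : M} (hx : x ∈ ℳ s) :
    gradingMap ℳ x = Finsupp.single s x := by
  ext t
  obtain rfl | hst := eq_or_ne s t
  · simp [decompose_of_mem_same ℳ hx]
  · simp [decompose_of_mem_ne ℳ hx hst, hst]

theorem isGradingMap_gradingMap : IsGradingMap (gradingMap ℳ) where
  sum_eq m := by
    classical
    have hsupp : (gradingMap ℳ m).support ⊆ (decompose ℳ m).support := by
      intro s
      simp +contextual
    rw [Finsupp.sum_of_support_subset _ hsupp _ (fun _ _ => rfl)]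
    simpa using sum_support_decompose ℳ m
  apply_apply m s := gradingMap_of_mem ℳ (by simp)

theorem homogeneousSubmodule_gradingMap : homogeneousSubmodule (gradingMap ℳ) = ℳ := by
  ext s x
  refine ⟨fun hx => ?_, gradingMap_of_mem ℳ⟩
  have hxs : gradingMap ℳ x s = x := by
    rw [mem_homogeneousSubmodule.mp hx, Finsupp.single_eq_same]
  rw [← hxs, gradingMap_apply]
  exact (decompose ℳ x s).2

end gradingMap

theorem apply_coeAddMonoidHom_homogeneousSubmodule (f : M →ₗ[k] S →₀ M)
    (x : ⨁ s, homogeneousSubmodule f s) (t : S) :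
    f (DirectSum.coeAddMonoidHom (homogeneousSubmodule f) x) t = x t := by
  induction x using DirectSum.induction_on with
  | zero => simp
  | of s y =>
    obtain rfl | hst := eq_or_ne s t
    · simp [mem_homogeneousSubmodule.mp y.2]
    · simp [mem_homogeneousSubmodule.mp y.2, hst, of_eq_of_ne _ _ _ hst.symm]
  | add x y hx hy => simp [hx, hy]

theorem IsGradingMap.isInternal {f : M →ₗ[k] S →₀ M} (hf : IsGradingMap f) :
    IsInternal (homogeneousSubmodule f) := by
  refine ⟨fun x y hxy => ?_, fun m => ?_⟩
  · ext t
    simpa [apply_coeAddMonoidHom_homogeneousSubmodule] using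
      DFunLike.congr_fun (congrArg f hxy) t
  · refine ⟨∑ s ∈ (f m).support,
      of (fun s => homogeneousSubmodule f s) s ⟨f m s, hf.apply_apply m s⟩, ?_⟩
    simpa [Finsupp.sum] using hf.sum_eq m

theorem IsGradingMap.gradingMap_eq {f : M →ₗ[k] S →₀ M} (hf : IsGradingMap f) :
    @gradingMap k S M _ _ _ _ _ hf.isInternal.chooseDecomposition = f := by
  let := hf.isInternal.chooseDecomposition
  ext m t
  conv_rhs => rw [← (decompose (homogeneousSubmodule f)).symm_apply_apply m]
  exact (apply_coeAddMonoidHom_homogeneousSubmodule f _ t).symm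

def decompositionEquivGradingMap :
    (Σ ℳ : S → Submodule k M, Decomposition ℳ) ≃ {f : M →ₗ[k] S →₀ M // IsGradingMap f} where
  toFun := fun ⟨ℳ, _⟩ => ⟨gradingMap ℳ, isGradingMap_gradingMap ℳ⟩
  invFun f := ⟨homogeneousSubmodule f.1, f.2.isInternal.chooseDecomposition⟩
  left_inv := fun ⟨ℳ, _⟩ =>
    Sigma.ext (homogeneousSubmodule_gradingMap ℳ)
      (Subsingleton.helim (congrArg Decomposition (homogeneousSubmodule_gradingMap ℳ)) _ _)
  right_inv f := Subtype.ext f.2.gradingMap_eq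

theorem isCoaction_iff_isGradingMap_finsuppScalarRight_comp (μ : M →ₗ[k] M ⊗[k] (S →₀ k)) :
    (TensorProduct.map LinearMap.id Coalgebra.counit ∘ₗ μ
          = (TensorProduct.rid k M).symm.toLinearMap) ∧
        (TensorProduct.map μ LinearMap.id ∘ₗ μ
          = (TensorProduct.assoc k M (S →₀ k) (S →₀ k)).symm.toLinearMap
              ∘ₗ TensorProduct.map LinearMap.id Coalgebra.comul ∘ₗ μ) ↔
      IsGradingMap ((TensorProduct.finsuppScalarRight k k M S).toLinearMap ∘ₗ μ) := by
  rw [TensorProduct.map_id_counit_comp_eq_rid_symm_iff,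
    TensorProduct.map_comp_eq_assoc_symm_comp_map_id_comul_iff]
  simp only [← TensorProduct.finsuppScalarRight_symm_apply_single (S := k),
    LinearEquiv.eq_symm_apply]
  exact ⟨fun ⟨h₁, h₂⟩ => ⟨h₁, h₂⟩, fun h => ⟨h.sum_eq, h.apply_apply⟩⟩

end DirectSum

end

/-- The assignment sending an `S`-indexed internal direct sum decomposition `ℳ` of `M` to
the coaction `μ_ℳ` is a bijection from the set of such decompositions onto the set of
counital coassociative coactions of `S →₀ k` on `M`. -/
theorem decomposition_equiv_coactions
    (k S M : Type*) [CommRing k] [DecidableEq S] [AddCommGroup M] [Module k M] :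
    ∃ e : (Σ ℳ : S → Submodule k M, DirectSum.Decomposition ℳ) ≃
        {μ : M →ₗ[k] M ⊗[k] (S →₀ k) //
          (TensorProduct.map LinearMap.id Coalgebra.counit ∘ₗ μ
            = (TensorProduct.rid k M).symm.toLinearMap) ∧
          (TensorProduct.map μ LinearMap.id ∘ₗ μ
            = (TensorProduct.assoc k M (S →₀ k) (S →₀ k)).symm.toLinearMap
                ∘ₗ TensorProduct.map LinearMap.id Coalgebra.comul ∘ₗ μ)},
      ∀ x : Σ ℳ : S → Submodule k M, DirectSum.Decomposition ℳ,
        ⇑(e x).val = @muOf k S M _ _ _ _ x.1 x.2 := by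
  let coactionEquiv := Equiv.subtypeEquiv
    (LinearEquiv.congrRight (TensorProduct.finsuppScalarRight k k M S)).toEquiv
    DirectSum.isCoaction_iff_isGradingMap_finsuppScalarRight_comp
  refine ⟨DirectSum.decompositionEquivGradingMap.trans coactionEquiv.symm, ?_⟩
  rintro ⟨ℳ, _⟩
  funext m
  change (TensorProduct.finsuppScalarRight k k M S).symm (DirectSum.gradingMap ℳ m) = _
  simp [muOf, TensorProduct.finsuppScalarRight_symm_eq_finsum]
end

section
/- Let k be a commutative ring, S a type, M a k-module, and ℳ : S → Submodule k M a family of submodules forming an internal direct sum decomposition of M. Then the k-linear map μ_ℳ : M →ₗ[k] M ⊗[k] (S →₀ k) defined by μ_ℳ(m) = Σ_{s ∈ S} (the ℳ s-component of m) ⊗ₜ single s 1 is a counital and coassociative coaction of S →₀ k on M. -/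
open TensorProduct

/-!
More generally, tensoring the `s`-component of `m` with a group-like element `g s` of any
coalgebra `C` gives a coaction of `C` on `M`: counitality and coassociativity are identities of
linear maps out of `M`, so they may be checked on each homogeneous piece `ℳ s`, where they reduce
to `ε (g s) = 1` and `Δ (g s) = g s ⊗ g s`. The basis vectors `single s 1` of `S →₀ k` are
group-like.
-/

theorem Finsupp.isGroupLikeElem_single_one {k S : Type*} [CommSemiring k] (s : S) :
    IsGroupLikeElem k (Finsupp.single s (1 : k)) where
  counit_eq_one := by rw [Finsupp.counit_single, CommSemiring.counit_apply]
  comul_eq_tmul_self := by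
    rw [Finsupp.comul_single, CommSemiring.comul_apply, TensorProduct.map_tmul,
      Finsupp.lsingle_apply]

namespace DirectSum

variable {k S M C : Type*} [CommSemiring k] [DecidableEq S] [AddCommMonoid M] [Module k M]
  [AddCommMonoid C] [Module k C] (ℳ : S → Submodule k M) [Decomposition ℳ] (g : S → C)

def decompositionCoaction : M →ₗ[k] M ⊗[k] C :=
  toModule k S _ (fun s => (TensorProduct.mk k M C).flip (g s) ∘ₗ (ℳ s).subtype)
    ∘ₗ (decomposeLinearEquiv ℳ).toLinearMap

@[simp]
theorem decompositionCoaction_coe {s : S} (x : ℳ s) :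
    decompositionCoaction ℳ g (x : M) = (x : M) ⊗ₜ[k] g s := by
  simp [decompositionCoaction]

theorem decompositionCoaction_apply (m : M) :
    decompositionCoaction ℳ g m = ∑ᶠ s, (decompose ℳ m s : M) ⊗ₜ[k] g s := by
  classical
  have support_subset : (Function.support fun s => (decompose ℳ m s : M) ⊗ₜ[k] g s) ⊆
      (decompose ℳ m).support := fun s hs =>
    DFinsupp.mem_support_iff.2 fun h => hs (by simp [h])
  conv_lhs => rw [← sum_support_decompose ℳ m]
  rw [finsum_eq_sum_of_support_subset _ support_subset, map_sum]
  simp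

variable [Coalgebra k C] {ℳ g}

theorem map_counit_comp_decompositionCoaction (hg : ∀ s, IsGroupLikeElem k (g s)) :
    TensorProduct.map LinearMap.id Coalgebra.counit ∘ₗ decompositionCoaction ℳ g
      = (TensorProduct.rid k M).symm.toLinearMap :=
  decompose_lhom_ext ℳ fun s => LinearMap.ext fun x => by simp [hg s]

theorem map_decompositionCoaction_comp_decompositionCoaction
    (hg : ∀ s, IsGroupLikeElem k (g s)) :
    TensorProduct.map (decompositionCoaction ℳ g) LinearMap.id ∘ₗ decompositionCoaction ℳ g
      = (TensorProduct.assoc k M C C).symm.toLinearMap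
          ∘ₗ TensorProduct.map LinearMap.id Coalgebra.comul ∘ₗ decompositionCoaction ℳ g :=
  decompose_lhom_ext ℳ fun s => LinearMap.ext fun x => by simp [hg s]

end DirectSum

/-- For an internal direct sum decomposition `ℳ : S → Submodule k M` of a `k`-module `M`,
the `k`-linear map `μ_ℳ : M →ₗ[k] M ⊗[k] (S →₀ k)`,
`μ_ℳ m = Σ_{s ∈ S} (the ℳ s-component of m) ⊗ₜ single s 1`, is a counital and
coassociative coaction of the coalgebra `S →₀ k` on `M`. -/
theorem coaction_of_decomposition
    (k S M : Type*) [CommRing k] [DecidableEq S] [AddCommGroup M] [Module k M]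
    (ℳ : S → Submodule k M) [DirectSum.Decomposition ℳ] :
    ∃ μ : M →ₗ[k] M ⊗[k] (S →₀ k),
      (∀ m : M,
        μ m = ∑ᶠ s : S, ((DirectSum.decompose ℳ m) s : M) ⊗ₜ[k] Finsupp.single s (1 : k)) ∧
      (TensorProduct.map LinearMap.id Coalgebra.counit ∘ₗ μ
        = (TensorProduct.rid k M).symm.toLinearMap) ∧
      (TensorProduct.map μ LinearMap.id ∘ₗ μ
        = (TensorProduct.assoc k M (S →₀ k) (S →₀ k)).symm.toLinearMap
            ∘ₗ TensorProduct.map LinearMap.id Coalgebra.comul ∘ₗ μ) :=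
  ⟨DirectSum.decompositionCoaction ℳ (Finsupp.single · 1),
    DirectSum.decompositionCoaction_apply ℳ _,
    DirectSum.map_counit_comp_decompositionCoaction Finsupp.isGroupLikeElem_single_one,
    DirectSum.map_decompositionCoaction_comp_decompositionCoaction
      Finsupp.isGroupLikeElem_single_one⟩
end
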